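/- For every positive integer n, every real α with 0 < α ≤ 1/n and every real x ≥ 0, the first and second central moments satisfy Θ_{n,1}^[α](x) = 1/n and Θ_{n,2}^[α](x) = (α n² x + 2nx + 2)/n². -/

import Mathlib

open MeasureTheory Filter

noncomputable section

/-- The Szász basis function `e^(-nu) (nu)^i / i!`. -/
def szaszBasis (n i : ℕ) (u : ℝ) : ℝ :=
  Real.exp (-(n : ℝ) * u) * ((n : ℝ) * u) ^ i / (Nat.factorial i : ℝ)

/-- The rising factorial `x^(i,-α) = ∏_{j=0}^{i-1} (x + jα)` with increment `α`. -/
def risingFac (x α : ℝ) (i : ℕ) : ℝ :=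
  ∏ j ∈ Finset.range i, (x + (j : ℝ) * α)

/-- The Durrmeyer modification of the generalized Szász-Mirakjan operators:
`U_n^[α](f; x) = n Σ_i (1+nα)^(−x/α) (α+1/n)^(−i) x^(i,−α)/i! ∫_0^∞ e^(−nu)(nu)^i/i! f(u) du`. -/
def U (n : ℕ) (α : ℝ) (f : ℝ → ℝ) (x : ℝ) : ℝ :=
  (n : ℝ) * ∑' i : ℕ,
    (1 + (n : ℝ) * α) ^ (-x / α) * (α + 1 / (n : ℝ)) ^ (-(i : ℤ)) *
      (risingFac x α i / (Nat.factorial i : ℝ)) *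
      ∫ u in Set.Ioi (0 : ℝ), szaszBasis n i u * f u

/-- The `m`-th central moment `Θ_{n,m}^[α](x) = U_n^[α]((t−x)^m; x)`. -/
def theta (n : ℕ) (α : ℝ) (m : ℕ) (x : ℝ) : ℝ :=
  U n α (fun t => (t - x) ^ m) x

end

/-!
With `c = x / α` and `p = 1 + n α`, the `i`-th weight of `U_n^[α]` at `x` is
`p ^ (-c) * multichoose c i * (1 - 1/p) ^ i`: the weights form a negative binomial distribution.
The binomial series `∑ multichoose c i * w ^ i = (1 - w) ^ (-c)` and its shifts give total
mass `1`, mean `n x` and second factorial moment `n² x (x + α)`. The Szász integrals are Gamma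
integrals, `∫ s_{n,i}(u) u ^ k du = (i + k)! / (i! n ^ (k + 1))`, so both central moments are
linear combinations of these three sums.
-/

open Set

theorem abs_one_sub_inv_lt_one {p : ℝ} (hp : 1 ≤ p) : |1 - p⁻¹| < 1 := by
  have h0 : 0 < p⁻¹ := inv_pos.mpr (by linarith)
  have h1 : p⁻¹ ≤ 1 := inv_le_one_of_one_le₀ hp
  rw [abs_lt]
  constructor <;> linarith

theorem Real.rpow_neg_mul_inv_rpow_neg {p : ℝ} (hp : 0 < p) (c s : ℝ) :
    p ^ (-c) * p⁻¹ ^ (-s) = p ^ (s - c) := by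
  rw [Real.inv_rpow hp.le, Real.rpow_neg hp.le s, inv_inv, ← Real.rpow_add hp, neg_add_eq_sub]

theorem Real.hasSum_multichoose_mul_pow (c : ℝ) {w : ℝ} (hw : |w| < 1) :
    HasSum (fun i : ℕ => Ring.multichoose c i * w ^ i) ((1 - w) ^ (-c)) := by
  have hball : w ∈ Metric.eball (0 : ℝ) 1 := by
    simpa [Metric.mem_eball, edist_dist, Real.dist_eq] using ENNReal.ofReal_lt_one.mpr hw
  have h := (Real.one_div_one_sub_rpow_hasFPowerSeriesOnBall_zero c).hasSum hball
  simp only [FormalMultilinearSeries.ofScalars_apply_eq, smul_eq_mul, zero_add] at h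
  rw [Real.rpow_neg (by linarith [le_abs_self w]), inv_eq_one_div]
  simpa only [Ring.multichoose_eq] using h

theorem Real.multichoose_eq_ascPochhammer_eval_div (c : ℝ) (i : ℕ) :
    Ring.multichoose c i = (ascPochhammer ℝ i).eval c / i.factorial := by
  rw [eq_div_iff (by positivity), mul_comm, ← nsmul_eq_mul,
    Ring.factorial_nsmul_multichoose_eq_ascPochhammer, Polynomial.ascPochhammer_smeval_eq_eval]

theorem Real.succ_mul_multichoose_succ (c : ℝ) (i : ℕ) :
    ((i : ℝ) + 1) * Ring.multichoose c (i + 1) = c * Ring.multichoose (c + 1) i := by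
  simp only [Real.multichoose_eq_ascPochhammer_eval_div, ascPochhammer_succ_left,
    Polynomial.eval_mul, Polynomial.eval_X, Polynomial.eval_comp, Polynomial.eval_add,
    Polynomial.eval_one, Nat.factorial_succ, Nat.cast_mul]
  push_cast
  field_simp

theorem Real.hasSum_natCast_mul_multichoose_mul_pow (c : ℝ) {w : ℝ} (hw : |w| < 1) :
    HasSum (fun i : ℕ => (i : ℝ) * (Ring.multichoose c i * w ^ i))
      (c * w * (1 - w) ^ (-(c + 1))) := by
  refine (hasSum_nat_add_iff' 1).mp ?_
  simpa [pow_succ, ← mul_assoc, Real.succ_mul_multichoose_succ, mul_right_comm _ w]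
    using (Real.hasSum_multichoose_mul_pow (c + 1) hw).mul_left (c * w)

theorem Real.hasSum_natCast_mul_natCast_sub_one_mul_multichoose_mul_pow (c : ℝ) {w : ℝ}
    (hw : |w| < 1) :
    HasSum (fun i : ℕ => (i : ℝ) * ((i : ℝ) - 1) * (Ring.multichoose c i * w ^ i))
      (c * (c + 1) * w ^ 2 * (1 - w) ^ (-(c + 2))) := by
  refine (hasSum_nat_add_iff' 1).mp ?_
  rw [Finset.sum_range_one, Nat.cast_zero, zero_mul, zero_mul, sub_zero,
    show c * (c + 1) * w ^ 2 * (1 - w) ^ (-(c + 2))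
      = c * w * ((c + 1) * w * (1 - w) ^ (-(c + 1 + 1))) by ring_nf]
  refine ((Real.hasSum_natCast_mul_multichoose_mul_pow (c + 1) hw).mul_left (c * w)).congr_fun
    fun j => ?_
  push_cast
  linear_combination (j * w ^ (j + 1)) * Real.succ_mul_multichoose_succ c j

theorem Real.integral_pow_mul_exp_neg_mul_Ioi {r : ℝ} (hr : 0 < r) (m : ℕ) :
    ∫ u in Ioi (0 : ℝ), u ^ m * Real.exp (-(r * u)) = m.factorial / r ^ (m + 1) := by
  have h := Real.integral_rpow_mul_exp_neg_mul_Ioi (a := (m : ℝ) + 1) (by positivity) hr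
  simp only [add_sub_cancel_right, Real.rpow_natCast] at h
  rw [h, Real.Gamma_nat_eq_factorial, ← Nat.cast_succ, Real.rpow_natCast, div_pow, one_pow,
    one_div_mul_eq_div]

theorem Real.integrableOn_pow_mul_exp_neg_mul_Ioi {r : ℝ} (hr : 0 < r) (m : ℕ) :
    IntegrableOn (fun u : ℝ => u ^ m * Real.exp (-(r * u))) (Ioi 0) := by
  simpa only [Real.rpow_natCast, Real.rpow_one, neg_mul] using
    integrableOn_rpow_mul_exp_neg_mul_rpow (s := m) (neg_one_lt_zero.trans_le m.cast_nonneg)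
      one_pos hr

theorem szaszBasis_mul_pow (n i k : ℕ) (u : ℝ) :
    szaszBasis n i u * u ^ k
      = (n : ℝ) ^ i / i.factorial * (u ^ (i + k) * Real.exp (-(n * u))) := by
  rw [szaszBasis, mul_pow, pow_add, neg_mul]
  ring

theorem integrableOn_szaszBasis_mul_pow {n : ℕ} (hn : 0 < n) (i k : ℕ) :
    IntegrableOn (fun u => szaszBasis n i u * u ^ k) (Ioi 0) := by
  simp only [szaszBasis_mul_pow]
  exact (Real.integrableOn_pow_mul_exp_neg_mul_Ioi (Nat.cast_pos.mpr hn) _).const_mul _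

theorem integral_szaszBasis_mul_pow {n : ℕ} (hn : 0 < n) (i k : ℕ) :
    ∫ u in Ioi (0 : ℝ), szaszBasis n i u * u ^ k
      = (i + k).factorial / (i.factorial * (n : ℝ) ^ (k + 1)) := by
  simp only [szaszBasis_mul_pow]
  rw [integral_const_mul, Real.integral_pow_mul_exp_neg_mul_Ioi (Nat.cast_pos.mpr hn)]
  field_simp
  ring

theorem integral_szaszBasis_mul_sub {n : ℕ} (hn : 0 < n) (i : ℕ) (x : ℝ) :
    ∫ u in Ioi (0 : ℝ), szaszBasis n i u * (u - x) ^ 1 = ((i + 1) - n * x) / (n : ℝ) ^ 2 := by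
  have hI := integrableOn_szaszBasis_mul_pow hn i
  have h : (fun u => szaszBasis n i u * (u - x) ^ 1)
      = fun u => szaszBasis n i u * u ^ 1 - x * (szaszBasis n i u * u ^ 0) := by
    ext u; ring
  rw [h, integral_sub (hI 1) ((hI 0).const_mul x), integral_const_mul,
    integral_szaszBasis_mul_pow hn, integral_szaszBasis_mul_pow hn]
  simp only [add_zero, Nat.factorial_succ]
  push_cast
  field_simp

theorem integral_szaszBasis_mul_sub_sq {n : ℕ} (hn : 0 < n) (i : ℕ) (x : ℝ) :
    ∫ u in Ioi (0 : ℝ), szaszBasis n i u * (u - x) ^ 2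
      = ((i + 1) * (i + 2) - 2 * n * x * (i + 1) + n ^ 2 * x ^ 2) / (n : ℝ) ^ 3 := by
  have hI := integrableOn_szaszBasis_mul_pow hn i
  have h : (fun u => szaszBasis n i u * (u - x) ^ 2)
      = fun u => szaszBasis n i u * u ^ 2 - 2 * x * (szaszBasis n i u * u ^ 1)
          + x ^ 2 * (szaszBasis n i u * u ^ 0) := by
    ext u; ring
  have hI21 : IntegrableOn (fun u => szaszBasis n i u * u ^ 2 - 2 * x * (szaszBasis n i u * u ^ 1))
      (Ioi 0) := (hI 2).sub ((hI 1).const_mul _)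
  rw [h, integral_add hI21 ((hI 0).const_mul _),
    integral_sub (hI 2) ((hI 1).const_mul _), integral_const_mul, integral_const_mul,
    integral_szaszBasis_mul_pow hn, integral_szaszBasis_mul_pow hn,
    integral_szaszBasis_mul_pow hn]
  simp only [add_zero, Nat.factorial_succ]
  push_cast
  field_simp
  ring

theorem risingFac_eq_pow_mul_ascPochhammer_eval (x : ℝ) {α : ℝ} (hα : α ≠ 0) (i : ℕ) :
    risingFac x α i = α ^ i * (ascPochhammer ℝ i).eval (x / α) := by
  induction i with
  | zero => simp [risingFac]
  | succ k ih =>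
    rw [risingFac, Finset.prod_range_succ, ← risingFac, ih, ascPochhammer_succ_eval, pow_succ]
    field_simp

noncomputable def szaszMirakjanWeight (n : ℕ) (α x : ℝ) (i : ℕ) : ℝ :=
  (1 + (n : ℝ) * α) ^ (-x / α) * (α + 1 / (n : ℝ)) ^ (-(i : ℤ)) *
    (risingFac x α i / (Nat.factorial i : ℝ))

theorem theta_eq_tsum (n : ℕ) (α : ℝ) (m : ℕ) (x : ℝ) :
    theta n α m x = n * ∑' i, szaszMirakjanWeight n α x i *
      ∫ u in Ioi (0 : ℝ), szaszBasis n i u * (u - x) ^ m :=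
  rfl

theorem szaszMirakjanWeight_eq {n : ℕ} (hn : 0 < n) {α : ℝ} (hα : 0 < α) (x : ℝ)
    (i : ℕ) :
    szaszMirakjanWeight n α x i = (1 + n * α) ^ (-(x / α)) *
      (Ring.multichoose (x / α) i * (1 - (1 + n * α)⁻¹) ^ i) := by
  rw [szaszMirakjanWeight, risingFac_eq_pow_mul_ascPochhammer_eval x hα.ne',
    Real.multichoose_eq_ascPochhammer_eval_div, zpow_neg, zpow_natCast, neg_div]
  have hn' : (0 : ℝ) < n := Nat.cast_pos.mpr hn
  have hw : 1 - (1 + n * α)⁻¹ = α * (α + 1 / n)⁻¹ := by field_simp; ring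
  rw [hw, mul_pow, inv_pow]
  ring

section Moments

variable {n : ℕ} (hn : 0 < n) {α : ℝ} (hα : 0 < α) (x : ℝ)
include hn hα

theorem hasSum_szaszMirakjanWeight : HasSum (szaszMirakjanWeight n α x) 1 := by
  have hp : 1 ≤ 1 + n * α := le_add_of_nonneg_right (by positivity)
  have h := (Real.hasSum_multichoose_mul_pow (x / α)
    (abs_one_sub_inv_lt_one hp)).mul_left ((1 + n * α) ^ (-(x / α)))
  rw [sub_sub_cancel, Real.rpow_neg_mul_inv_rpow_neg (by positivity), sub_self,
    Real.rpow_zero] at h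
  exact h.congr_fun (szaszMirakjanWeight_eq hn hα x)

theorem hasSum_natCast_mul_szaszMirakjanWeight :
    HasSum (fun i : ℕ => (i : ℝ) * szaszMirakjanWeight n α x i) (n * x) := by
  have hp : 1 ≤ 1 + n * α := le_add_of_nonneg_right (by positivity)
  have h := (Real.hasSum_natCast_mul_multichoose_mul_pow (x / α)
    (abs_one_sub_inv_lt_one hp)).mul_left ((1 + n * α) ^ (-(x / α)))
  rw [sub_sub_cancel, mul_left_comm, Real.rpow_neg_mul_inv_rpow_neg (by positivity),
    add_sub_cancel_left,
    Real.rpow_one,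
    show x / α * (1 - (1 + n * α)⁻¹) * (1 + n * α) = n * x by field_simp; ring] at h
  exact h.congr_fun fun i => by rw [szaszMirakjanWeight_eq hn hα]; ring

theorem hasSum_natCast_mul_natCast_sub_one_mul_szaszMirakjanWeight :
    HasSum (fun i : ℕ => (i : ℝ) * ((i : ℝ) - 1) * szaszMirakjanWeight n α x i)
      (n ^ 2 * x * (x + α)) := by
  have hp : 1 ≤ 1 + n * α := le_add_of_nonneg_right (by positivity)
  have h := (Real.hasSum_natCast_mul_natCast_sub_one_mul_multichoose_mul_pow (x / α)
    (abs_one_sub_inv_lt_one hp)).mul_left ((1 + n * α) ^ (-(x / α)))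
  rw [sub_sub_cancel, mul_left_comm, Real.rpow_neg_mul_inv_rpow_neg (by positivity),
    add_sub_cancel_left,
    show (2 : ℝ) = (2 : ℕ) by norm_num, Real.rpow_natCast,
    show x / α * (x / α + 1) * (1 - (1 + n * α)⁻¹) ^ 2 * (1 + n * α) ^ 2
      = n ^ 2 * x * (x + α) by field_simp; ring] at h
  exact h.congr_fun fun i => by rw [szaszMirakjanWeight_eq hn hα]; ring

theorem hasSum_szaszMirakjanWeight_mul_integral_sub :
    HasSum (fun i => szaszMirakjanWeight n α x i *
      ∫ u in Ioi (0 : ℝ), szaszBasis n i u * (u - x) ^ 1) (1 / n ^ 2) := by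
  have h := ((hasSum_natCast_mul_szaszMirakjanWeight hn hα x).add
    ((hasSum_szaszMirakjanWeight hn hα x).mul_left (1 - n * x))).div_const ((n : ℝ) ^ 2)
  rw [mul_one, add_sub_cancel] at h
  refine h.congr_fun fun i => ?_
  rw [integral_szaszBasis_mul_sub hn]
  ring

theorem hasSum_szaszMirakjanWeight_mul_integral_sub_sq :
    HasSum (fun i => szaszMirakjanWeight n α x i *
      ∫ u in Ioi (0 : ℝ), szaszBasis n i u * (u - x) ^ 2)
      ((α * n ^ 2 * x + 2 * n * x + 2) / n ^ 3) := by
  have h := (((hasSum_natCast_mul_natCast_sub_one_mul_szaszMirakjanWeight hn hα x).add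
    ((hasSum_natCast_mul_szaszMirakjanWeight hn hα x).mul_left (4 - 2 * n * x))).add
    ((hasSum_szaszMirakjanWeight hn hα x).mul_left (2 - 2 * n * x + n ^ 2 * x ^ 2))).div_const
    ((n : ℝ) ^ 3)
  rw [show n ^ 2 * x * (x + α) + (4 - 2 * n * x) * (n * x) + (2 - 2 * n * x + n ^ 2 * x ^ 2) * 1
    = α * n ^ 2 * x + 2 * n * x + 2 by ring] at h
  refine h.congr_fun fun i => ?_
  rw [integral_szaszBasis_mul_sub_sq hn]
  ring

end Moments

theorem stmt4_general (n : ℕ) (hn : 0 < n) (α : ℝ) (hα : 0 < α)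
    (x : ℝ) :
    theta n α 1 x = 1 / n ∧
    theta n α 2 x = (α * n ^ 2 * x + 2 * n * x + 2) / (n : ℝ) ^ 2 := by
  have hn' : (n : ℝ) ≠ 0 := Nat.cast_ne_zero.mpr hn.ne'
  rw [theta_eq_tsum, theta_eq_tsum,
    (hasSum_szaszMirakjanWeight_mul_integral_sub hn hα x).tsum_eq,
    (hasSum_szaszMirakjanWeight_mul_integral_sub_sq hn hα x).tsum_eq]
  constructor <;> field_simp

theorem stmt4 (n : ℕ) (hn : 0 < n) (α : ℝ) (hα : 0 < α) (hαn : α ≤ 1 / n)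
    (x : ℝ) (hx : 0 ≤ x) :
    theta n α 1 x = 1 / n ∧
    theta n α 2 x = (α * n ^ 2 * x + 2 * n * x + 2) / (n : ℝ) ^ 2 :=
  stmt4_general n hn α hα x
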